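/- Let A and T be nonempty compact convex subsets of ℝⁿ and let s ≥ 0. Then the (n+1)-dimensional Lebesgue measure of conv((A×{s}) ∪ ((A+sT)×{0})) ⊆ ℝⁿ⁺¹ equals ∫₀ˢ volₙ(A + r·T) dr, where volₙ denotes n-dimensional Lebesgue measure. -/

import Mathlib

/-!
Cavalieri's principle in the last coordinate. The hull of the two convex layers `A × {s}` and
`(A + s • T) × {0}` is the union of the segments joining them, so its slice at height `t ∈ [0, s]`
is `(t / s) • A + (1 - t / s) • (A + s • T)`; since `A` is convex, `θ • A + (1 - θ) • A = A`, and
the slice is `A + (s - t) • T`. Fubini then gives `∫₀ˢ vol(A + (s - t) • T) dt`, and `r = s - t`.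
-/

open Pointwise MeasureTheory Set

section Convex

variable {E : Type*} [AddCommGroup E] [Module ℝ E]

theorem IsCompact.convexJoin [TopologicalSpace E] [IsTopologicalAddGroup E] [ContinuousSMul ℝ E]
    {s t : Set E} (hs : IsCompact s) (ht : IsCompact t) : IsCompact (_root_.convexJoin ℝ s t) := by
  have himage : _root_.convexJoin ℝ s t =
      (fun p : (E × E) × ℝ => (1 - p.2) • p.1.1 + p.2 • p.1.2) '' ((s ×ˢ t) ×ˢ Icc 0 1) := by
    ext x
    simp only [mem_convexJoin, segment_eq_image, mem_image, mem_prod]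
    constructor
    · rintro ⟨a, ha, b, hb, θ, hθ, rfl⟩
      exact ⟨((a, b), θ), ⟨⟨ha, hb⟩, hθ⟩, rfl⟩
    · rintro ⟨⟨⟨a, b⟩, θ⟩, ⟨⟨ha, hb⟩, hθ⟩, rfl⟩
      exact ⟨a, ha, b, hb, θ, hθ, rfl⟩
  rw [himage]
  exact ((hs.prod ht).prod isCompact_Icc).image (by fun_prop)

theorem convexHull_prod_singleton_union_subset {A B : Set E} {s : ℝ} (hs : 0 ≤ s) :
    convexHull ℝ (A ×ˢ {s} ∪ B ×ˢ {0}) ⊆ univ ×ˢ Icc 0 s := by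
  refine convexHull_min ?_ (convex_univ.prod (convex_Icc 0 s))
  rintro ⟨x, r⟩ (⟨-, hr⟩ | ⟨-, hr⟩) <;> simp only [mem_singleton_iff] at hr <;> subst r
  exacts [⟨trivial, hs, le_rfl⟩, ⟨trivial, le_rfl, hs⟩]

theorem mk_mem_convexHull_prod_singleton_union_iff {A B : Set E} (hA : Convex ℝ A)
    (hB : Convex ℝ B) (hAne : A.Nonempty) (hBne : B.Nonempty) {s : ℝ} (hs : 0 < s) (x : E)
    (t : ℝ) :
    (x, t) ∈ convexHull ℝ (A ×ˢ {s} ∪ B ×ˢ {0}) ↔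
      t ∈ Icc 0 s ∧ x ∈ (t / s) • A + (1 - t / s) • B := by
  rw [(hA.prod (convex_singleton s)).convexHull_union (hB.prod (convex_singleton 0))
    (hAne.prod (singleton_nonempty _)) (hBne.prod (singleton_nonempty _)), mem_convexJoin]
  constructor
  · rintro ⟨⟨a, s'⟩, ⟨ha, hs'⟩, ⟨b, z⟩, ⟨hb, hz⟩, u, v, hu, hv, huv, hx⟩
    simp only [mem_singleton_iff] at hs' hz
    subst s' z
    simp only [Prod.smul_mk, Prod.mk_add_mk, smul_eq_mul, mul_zero, add_zero,
      Prod.mk.injEq] at hx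
    obtain ⟨rfl, rfl⟩ := hx
    rw [mul_div_cancel_right₀ u hs.ne', ← huv, add_sub_cancel_left]
    exact ⟨⟨by positivity, mul_le_of_le_one_left hs.le (by linarith)⟩,
      add_mem_add (smul_mem_smul_set ha) (smul_mem_smul_set hb)⟩
  · rintro ⟨⟨ht0, hts⟩, _, ⟨a, ha, rfl⟩, _, ⟨b, hb, rfl⟩, rfl⟩
    refine ⟨(a, s), ⟨ha, rfl⟩, (b, 0), ⟨hb, rfl⟩, t / s, 1 - t / s, by positivity,
      sub_nonneg.2 ((div_le_one hs).2 hts), add_sub_cancel _ _, ?_⟩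
    simp only [Prod.smul_mk, Prod.mk_add_mk, smul_eq_mul, mul_zero, add_zero]
    rw [div_mul_cancel₀ t hs.ne']

theorem Convex.smul_add_one_sub_smul_add {A : Set E} (hA : Convex ℝ A) {θ : ℝ} (hθ₀ : 0 ≤ θ)
    (hθ₁ : θ ≤ 1) (c : ℝ) (T : Set E) :
    θ • A + (1 - θ) • (A + c • T) = A + ((1 - θ) * c) • T := by
  rw [smul_add, ← add_assoc, ← hA.add_smul hθ₀ (sub_nonneg.2 hθ₁), add_sub_cancel, one_smul,
    smul_smul]

end Convex

theorem prod_apply_eq_setLIntegral_Ioc {α : Type*} [MeasurableSpace α] (μ : Measure α) [SFinite μ]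
    (ν : Measure ℝ) [SFinite ν] [NullSingletonClass ν] {K : Set (α × ℝ)} (hK : MeasurableSet K)
    {a b : ℝ} (hKab : K ⊆ univ ×ˢ Icc a b) :
    μ.prod ν K = ∫⁻ t in Ioc a b, μ ((fun x => (x, t)) ⁻¹' K) ∂ν := by
  have hsupport : (Function.support fun t => μ ((fun x => (x, t)) ⁻¹' K)) ⊆ Icc a b := by
    intro t ht
    obtain ⟨x, hx⟩ := nonempty_of_measure_ne_zero ht
    exact (hKab hx).2
  rw [Measure.prod_apply_symm hK, ← setLIntegral_eq_of_support_subset hsupport]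
  exact setLIntegral_congr Ioc_ae_eq_Icc.symm

section PushPull

variable {E : Type*} [AddCommGroup E] [Module ℝ E]

/-- The push-pull polytope `Δ(s, A)`. -/
def pushPull (A T : Set E) (s : ℝ) : Set (E × ℝ) :=
  convexHull ℝ (A ×ˢ {s} ∪ (A + s • T) ×ˢ {0})

variable {A T : Set E}

theorem pushPull_subset_prod_Icc {s : ℝ} (hs : 0 ≤ s) : pushPull A T s ⊆ univ ×ˢ Icc 0 s :=
  convexHull_prod_singleton_union_subset hs

theorem preimage_mk_pushPull (hA : Convex ℝ A) (hT : Convex ℝ T) (hAne : A.Nonempty)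
    (hTne : T.Nonempty) {s t : ℝ} (ht : t ∈ Ioc 0 s) :
    (fun x => (x, t)) ⁻¹' pushPull A T s = A + (s - t) • T := by
  have hs : 0 < s := ht.1.trans_le ht.2
  have hθ₁ : t / s ≤ 1 := (div_le_one hs).2 ht.2
  ext x
  rw [mem_preimage, pushPull, mk_mem_convexHull_prod_singleton_union_iff hA (hA.add (hT.smul s))
    hAne (hAne.add (hTne.smul_set)) hs, hA.smul_add_one_sub_smul_add (div_nonneg ht.1.le hs.le) hθ₁,
    one_sub_mul, div_mul_cancel₀ t hs.ne', and_iff_right (Ioc_subset_Icc_self ht)]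

theorem isCompact_pushPull [TopologicalSpace E] [IsTopologicalAddGroup E] [ContinuousSMul ℝ E]
    (hA : Convex ℝ A) (hT : Convex ℝ T) (hAne : A.Nonempty) (hTne : T.Nonempty)
    (hAc : IsCompact A) (hTc : IsCompact T) (s : ℝ) : IsCompact (pushPull A T s) := by
  rw [pushPull, (hA.prod (convex_singleton s)).convexHull_union
    ((hA.add (hT.smul s)).prod (convex_singleton 0)) (hAne.prod (singleton_nonempty _))
    ((hAne.add hTne.smul_set).prod (singleton_nonempty _))]
  exact (hAc.prod isCompact_singleton).convexJoin ((hAc.add (hTc.smul s)).prod isCompact_singleton)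

end PushPull

theorem pushPull_volume (n : ℕ) (A T : Set (Fin n → ℝ))
    (hAne : A.Nonempty) (hTne : T.Nonempty)
    (hAc : IsCompact A) (hTc : IsCompact T)
    (hAv : Convex ℝ A) (hTv : Convex ℝ T)
    (s : ℝ) (hs : 0 ≤ s) :
    (volume (convexHull ℝ
        ((A ×ˢ ({s} : Set ℝ)) ∪ ((A + s • T) ×ˢ ({0} : Set ℝ))))).toReal =
      ∫ r in (0 : ℝ)..s, (volume (A + r • T)).toReal := by
  have hK := (isCompact_pushPull hAv hTv hAne hTne hAc hTc s).measurableSet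
  have hslice : EqOn (fun t => volume ((fun x => (x, t)) ⁻¹' pushPull A T s))
      (fun t => volume (A + (s - t) • T)) (Ioc 0 s) := fun t ht =>
    congrArg volume (preimage_mk_pushPull hAv hTv hAne hTne ht)
  have hvol : volume (pushPull A T s) = ∫⁻ t in Ioc 0 s, volume (A + (s - t) • T) := by
    rw [Measure.volume_eq_prod, prod_apply_eq_setLIntegral_Ioc _ _ hK (pushPull_subset_prod_Icc hs),
      setLIntegral_congr_fun measurableSet_Ioc hslice]
  have hmeas : AEMeasurable (fun t => volume (A + (s - t) • T)) (volume.restrict (Ioc 0 s)) :=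
    (measurable_measure_prodMk_right hK).aemeasurable.congr
      ((ae_restrict_iff' measurableSet_Ioc).2 (ae_of_all _ hslice))
  have hfinite : ∀ t : ℝ, volume (A + (s - t) • T) < ⊤ :=
    fun t => (hAc.add (hTc.smul _)).measure_lt_top
  change (volume (pushPull A T s)).toReal = _
  rw [hvol, ← integral_toReal hmeas (ae_of_all _ hfinite), ← intervalIntegral.integral_of_le hs,
    intervalIntegral.integral_comp_sub_left (fun r => (volume (A + r • T)).toReal) s, sub_self,
    sub_zero]
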